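/- arXiv:1403.5171 — 2 statements merged into one kernel-verified Lean document; each statement's English description precedes it below -/
import Mathlib

section
/- Let (G,w) be a finite weighted graph with positive integer edge weights, let h ≥ 1 be an integer, and let ε > 0. For each natural number i set D'_i = 2^i and define rounded edge weights w'_i(e) = ⌈2h·w(e)/(ε·D'_i)⌉ for every edge e of G. Let u ≠ v be vertices with dist^h_{G,w}(u,v) < ∞. Then the index set I = { i ∈ ℕ : dist_{G,w'_i}(u,v) ≤ (1+2/ε)·h } is nonempty, and the quantity t := inf_{i ∈ I} (ε·D'_i/(2h))·dist_{G,w'_i}(u,v) satisfies dist_{G,w}(u,v) ≤ t ≤ (1+ε)·dist^h_{G,w}(u,v). -/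
/-!
Rounding weights up at scale `s` (so `w'(e) = ⌈w(e) / s⌉`) can only increase the weight of a
walk after multiplying back by `s`, which gives the lower bound at every scale, and it increases
it by less than `s` per edge. Take a lightest `u`–`v` walk `q` with at most `h` edges; its weight
`W` is an integer, and `W ≥ 1` because `u ≠ v`. Choosing `i` with `W ≤ 2^i ≤ 2W`, the scale
`s = ε 2^i / (2h)` makes the total rounding error along `q` at most `s h = ε 2^i / 2 ≤ ε W`,
and `q` has rounded weight at most `W / s + h ≤ (1 + 2/ε) h`, so `i` is an admissible index.
-/

open SimpleGraph
open scoped ENNReal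

noncomputable section

/-- The weight of a walk: the sum of the weights of its edges (with multiplicity). -/
def walkWeight {V : Type*} {G : SimpleGraph V} (w : Sym2 V → ℝ) {u v : V}
    (p : G.Walk u v) : ℝ :=
  (p.edges.map w).sum

/-- The distance between `u` and `v`: the minimum weight of a `u`–`v` walk (`∞` if none). -/
def wdist {V : Type*} (G : SimpleGraph V) (w : Sym2 V → ℝ) (u v : V) : ℝ≥0∞ :=
  ⨅ p : G.Walk u v, ENNReal.ofReal (walkWeight w p)

/-- The `h`-hop distance between `u` and `v`: the minimum weight of a `u`–`v` walk with at
most `h` edges (`∞` if none). -/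
def hopDist {V : Type*} (G : SimpleGraph V) (w : Sym2 V → ℝ) (h : ℕ) (u v : V) : ℝ≥0∞ :=
  ⨅ p : {p : G.Walk u v // p.length ≤ h}, ENNReal.ofReal (walkWeight w p.1)

section WalkWeight

variable {V : Type*} {G : SimpleGraph V} {u v : V}

lemma walkWeight_le_walkWeight {w₁ w₂ : Sym2 V → ℝ} (p : G.Walk u v)
    (hle : ∀ e ∈ p.edges, w₁ e ≤ w₂ e) : walkWeight w₁ p ≤ walkWeight w₂ p :=
  List.sum_le_sum hle

lemma walkWeight_const (c : ℝ) (p : G.Walk u v) :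
    walkWeight (fun _ => c) p = p.length * c := by
  simp only [walkWeight, List.map_const', List.sum_replicate, Walk.length_edges, nsmul_eq_mul]

lemma walkWeight_const_mul (c : ℝ) (w : Sym2 V → ℝ) (p : G.Walk u v) :
    walkWeight (fun e => c * w e) p = c * walkWeight w p :=
  List.sum_map_mul_left _ _ _

lemma walkWeight_add_const (w : Sym2 V → ℝ) (d : ℝ) (p : G.Walk u v) :
    walkWeight (fun e => w e + d) p = walkWeight w p + p.length * d := by
  rw [← walkWeight_const]
  exact List.sum_map_add

lemma walkWeight_natCast (w : Sym2 V → ℕ) (p : G.Walk u v) :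
    walkWeight (fun e => (w e : ℝ)) p = ((p.edges.map w).sum : ℕ) := by
  rw [walkWeight, Nat.cast_list_sum, List.map_map]
  rfl

lemma length_le_walkWeight_natCast {w : Sym2 V → ℕ} (hw : ∀ e ∈ G.edgeSet, 0 < w e)
    (p : G.Walk u v) : (p.length : ℝ) ≤ walkWeight (fun e => (w e : ℝ)) p := by
  rw [← mul_one (p.length : ℝ), ← walkWeight_const]
  refine walkWeight_le_walkWeight p fun e he => ?_
  exact_mod_cast hw e (p.edges_subset_edgeSet he)

lemma exists_walk_hopDist_eq (w : Sym2 V → ℕ) (h : ℕ)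
    (hfin : hopDist G (fun e => (w e : ℝ)) h u v < ⊤) :
    ∃ p : G.Walk u v, p.length ≤ h ∧
      hopDist G (fun e => (w e : ℝ)) h u v =
        ENNReal.ofReal (walkWeight (fun e => (w e : ℝ)) p) := by
  have : Nonempty {p : G.Walk u v // p.length ≤ h} := by
    by_contra hempty
    rw [not_nonempty_iff] at hempty
    simp [hopDist] at hfin
  let weight (p : {p : G.Walk u v // p.length ≤ h}) : ℕ := (p.1.edges.map w).sum
  let q := Function.argmin weight
  refine ⟨q.1, q.2, le_antisymm (iInf_le _ q) (le_iInf fun p => ?_)⟩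
  rw [walkWeight_natCast, walkWeight_natCast, ENNReal.ofReal_natCast, ENNReal.ofReal_natCast]
  exact_mod_cast Function.argmin_le weight p

end WalkWeight

section Rounding

variable {V : Type*} {G : SimpleGraph V} {u v : V} {w w' : Sym2 V → ℝ} {s : ℝ}

lemma walkWeight_le_mul_walkWeight_ceil (hs : 0 < s)
    (hw' : ∀ e ∈ G.edgeSet, w' e = ⌈w e / s⌉) (p : G.Walk u v) :
    walkWeight w p ≤ s * walkWeight w' p := by
  rw [← walkWeight_const_mul]
  refine walkWeight_le_walkWeight p fun e he => ?_
  rw [hw' e (p.edges_subset_edgeSet he)]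
  exact (div_le_iff₀' hs).1 (Int.le_ceil _)

lemma mul_walkWeight_ceil_le (hs : 0 < s)
    (hw' : ∀ e ∈ G.edgeSet, w' e = ⌈w e / s⌉) (p : G.Walk u v) :
    s * walkWeight w' p ≤ walkWeight w p + s * p.length := by
  rw [← walkWeight_const_mul, mul_comm s, ← walkWeight_add_const]
  refine walkWeight_le_walkWeight p fun e he => ?_
  rw [hw' e (p.edges_subset_edgeSet he)]
  calc s * ⌈w e / s⌉ ≤ s * (w e / s + 1) := by gcongr; exact (Int.ceil_lt_add_one _).le
    _ = w e + s := by field_simp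

lemma wdist_le_ofReal_mul_wdist_ceil (hs : 0 < s)
    (hw' : ∀ e ∈ G.edgeSet, w' e = ⌈w e / s⌉) :
    wdist G w u v ≤ ENNReal.ofReal s * wdist G w' u v := by
  rw [wdist, wdist, ENNReal.mul_iInf_of_ne (by simpa using hs) ENNReal.ofReal_ne_top]
  refine iInf_mono fun p => ?_
  rw [← ENNReal.ofReal_mul hs.le]
  exact ENNReal.ofReal_le_ofReal (walkWeight_le_mul_walkWeight_ceil hs hw' p)

end Rounding

lemma exists_le_two_pow_le_two_mul {x : ℝ} (hx : 1 ≤ x) :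
    ∃ i : ℕ, x ≤ 2 ^ i ∧ 2 ^ i ≤ 2 * x := by
  obtain ⟨i, hi, hi'⟩ := exists_nat_pow_near (by linarith : 1 ≤ 2 * x) one_lt_two
  exact ⟨i, by rw [pow_succ] at hi'; linarith, hi⟩

lemma rounding_bounds_of_le_le_two_mul {ε h W D x : ℝ} (hε : 0 < ε) (hh : 0 < h) (hD : 0 < D)
    (hWD : W ≤ D) (hDW : D ≤ 2 * W)
    (hx : ε * D / (2 * h) * x ≤ W + ε * D / (2 * h) * h) :
    x ≤ (1 + 2 / ε) * h ∧ ε * D / (2 * h) * x ≤ (1 + ε) * W := by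
  have hs : 0 < ε * D / (2 * h) := by positivity
  have hsh : ε * D / (2 * h) * h = ε * D / 2 := by field_simp
  refine ⟨le_of_mul_le_mul_left ?_ hs, by nlinarith⟩
  calc ε * D / (2 * h) * x ≤ D + ε * D / (2 * h) * h := by linarith
    _ = ε * D / (2 * h) * ((1 + 2 / ε) * h) := by field_simp; ring

theorem stmt_5_general {V : Type*} (G : SimpleGraph V) (w : Sym2 V → ℕ)
    (hw : ∀ e ∈ G.edgeSet, 0 < w e)
    (h : ℕ) (ε : ℝ) (hε : 0 < ε)
    (w' : ℕ → Sym2 V → ℝ)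
    (hw' : ∀ i : ℕ, ∀ e ∈ G.edgeSet,
      w' i e = ((⌈2 * (h : ℝ) * (w e : ℝ) / (ε * 2 ^ i)⌉ : ℤ) : ℝ))
    (u v : V) (huv : u ≠ v)
    (hfin : hopDist G (fun e => (w e : ℝ)) h u v < ⊤) :
    {i : ℕ | wdist G (w' i) u v ≤ ENNReal.ofReal ((1 + 2 / ε) * h)}.Nonempty ∧
    wdist G (fun e => (w e : ℝ)) u v ≤
      (⨅ i ∈ {i : ℕ | wdist G (w' i) u v ≤ ENNReal.ofReal ((1 + 2 / ε) * h)},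
        ENNReal.ofReal (ε * 2 ^ i / (2 * h)) * wdist G (w' i) u v) ∧
    (⨅ i ∈ {i : ℕ | wdist G (w' i) u v ≤ ENNReal.ofReal ((1 + 2 / ε) * h)},
        ENNReal.ofReal (ε * 2 ^ i / (2 * h)) * wdist G (w' i) u v) ≤
      ENNReal.ofReal (1 + ε) * hopDist G (fun e => (w e : ℝ)) h u v := by
  obtain ⟨q, hq_len, hq⟩ := exists_walk_hopDist_eq w h hfin
  have hq_pos : 1 ≤ q.length :=
    Nat.one_le_iff_ne_zero.2 fun h0 => huv (q.eq_of_length_eq_zero h0)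
  have hh : (0 : ℝ) < h := by exact_mod_cast hq_pos.trans hq_len
  have hW : 1 ≤ walkWeight (fun e => (w e : ℝ)) q :=
    le_trans (by exact_mod_cast hq_pos) (length_le_walkWeight_natCast hw q)
  have hs (i : ℕ) : 0 < ε * 2 ^ i / (2 * h) := by positivity
  have hw_ceil (i : ℕ) :
      ∀ e ∈ G.edgeSet, w' i e = ⌈(w e : ℝ) / (ε * 2 ^ i / (2 * h))⌉ := by
    intro e he
    rw [hw' i e he, div_div_eq_mul_div, mul_comm]
  obtain ⟨i, hWi, hiW⟩ := exists_le_two_pow_le_two_mul hW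
  obtain ⟨hmem, hscaled⟩ := rounding_bounds_of_le_le_two_mul hε hh (by positivity) hWi hiW
    ((mul_walkWeight_ceil_le (hs i) (hw_ceil i) q).trans (by gcongr))
  have hi : wdist G (w' i) u v ≤ ENNReal.ofReal ((1 + 2 / ε) * h) :=
    (iInf_le _ q).trans (ENNReal.ofReal_le_ofReal hmem)
  refine ⟨⟨i, hi⟩,
    le_iInf₂ fun j _ => wdist_le_ofReal_mul_wdist_ceil (hs j) (hw_ceil j), ?_⟩
  calc _ ≤ ENNReal.ofReal (ε * 2 ^ i / (2 * h)) * wdist G (w' i) u v := iInf₂_le i hi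
    _ ≤ ENNReal.ofReal (ε * 2 ^ i / (2 * h)) *
        ENNReal.ofReal (walkWeight (w' i) q) :=
      mul_le_mul_right (iInf_le _ q) _
    _ = ENNReal.ofReal (ε * 2 ^ i / (2 * h) * walkWeight (w' i) q) :=
      (ENNReal.ofReal_mul (hs i).le).symm
    _ ≤ ENNReal.ofReal ((1 + ε) * walkWeight (fun e => (w e : ℝ)) q) :=
      ENNReal.ofReal_le_ofReal hscaled
    _ = _ := by rw [ENNReal.ofReal_mul (by positivity), hq]

theorem stmt_5 {V : Type*} [Fintype V] (G : SimpleGraph V) (w : Sym2 V → ℕ)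
    (hw : ∀ e ∈ G.edgeSet, 0 < w e)
    (h : ℕ) (hh : 1 ≤ h) (ε : ℝ) (hε : 0 < ε)
    (w' : ℕ → Sym2 V → ℝ)
    (hw' : ∀ i : ℕ, ∀ e ∈ G.edgeSet,
      w' i e = ((⌈2 * (h : ℝ) * (w e : ℝ) / (ε * 2 ^ i)⌉ : ℤ) : ℝ))
    (u v : V) (huv : u ≠ v)
    (hfin : hopDist G (fun e => (w e : ℝ)) h u v < ⊤) :
    {i : ℕ | wdist G (w' i) u v ≤ ENNReal.ofReal ((1 + 2 / ε) * h)}.Nonempty ∧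
    wdist G (fun e => (w e : ℝ)) u v ≤
      (⨅ i ∈ {i : ℕ | wdist G (w' i) u v ≤ ENNReal.ofReal ((1 + 2 / ε) * h)},
        ENNReal.ofReal (ε * 2 ^ i / (2 * h)) * wdist G (w' i) u v) ∧
    (⨅ i ∈ {i : ℕ | wdist G (w' i) u v ≤ ENNReal.ofReal ((1 + 2 / ε) * h)},
        ENNReal.ofReal (ε * 2 ^ i / (2 * h)) * wdist G (w' i) u v) ≤
      ENNReal.ofReal (1 + ε) * hopDist G (fun e => (w e : ℝ)) h u v :=
  stmt_5_general G w hw h ε hε w' hw' u v huv hfin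
end
end

section
/- Let (G,w) be a connected finite weighted graph on n vertices with positive real edge weights, let k be an integer with 1 ≤ k ≤ n−1, and for each vertex u let S(u) be a set of k nearest vertices to u. Let (G',w') be the k-shortcut graph of (G,w). Let u,v be vertices and let P = ⟨u = x_0, x_1, …, x_ℓ = v⟩ be a path in G' with w'(P) = dist_{G',w'}(u,v) that has the minimum number of edges among all u–v paths in G' of weight dist_{G',w'}(u,v). Then for every integer i with 0 ≤ i ≤ ℓ/4 − 1, the sets S(x_{4i}) and S(x_{4(i+1)}) are disjoint. -/
open SimpleGraph
open scoped ENNReal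

noncomputable section

/-!
Write `a = x₄ᵢ`, `c = x₄ᵢ₊₂`, `b = x₄ᵢ₊₄` and suppose `z ∈ S(a) ∩ S(b)`. Because `P` has the
fewest edges among lightest paths, every segment of `P` is strictly lighter than any walk with the
same ends and fewer edges. Every `w'`-walk is at least as heavy as the `G`-distance between its
ends, and a shortcut edge weighs exactly that distance; hence `c ∉ S(a)` and `c ∉ S(b)`, for
otherwise one shortcut edge would beat two edges of `P`. Nearness then gives `d(a,z) ≤ d(a,c)` and
`d(b,z) ≤ d(b,c)`, so the two-edge walk `a z b` is no heavier than the four edges of `P` from `a`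
to `b`, a contradiction.
-/

open Walk

section

variable {V : Type*} {G : SimpleGraph V}

section WalkWeight

variable (w : Sym2 V → ℝ)

@[simp]
lemma walkWeight_nil (u : V) : walkWeight w (nil : G.Walk u u) = 0 := by
  simp [walkWeight]

@[simp]
lemma walkWeight_cons {u v x : V} (h : G.Adj u v) (p : G.Walk v x) :
    walkWeight w (cons h p) = w s(u, v) + walkWeight w p := by
  simp [walkWeight]

@[simp]
lemma walkWeight_append {u v x : V} (p : G.Walk u v) (q : G.Walk v x) :
    walkWeight w (p.append q) = walkWeight w p + walkWeight w q := by
  simp [walkWeight, edges_append]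

@[simp]
lemma walkWeight_reverse {u v : V} (p : G.Walk u v) : walkWeight w p.reverse = walkWeight w p := by
  simp [walkWeight, edges_reverse, List.sum_reverse]

variable {w}

lemma walkWeight_nonneg (hw : ∀ e ∈ G.edgeSet, 0 ≤ w e) {u v : V} (p : G.Walk u v) :
    0 ≤ walkWeight w p :=
  List.sum_nonneg <| by
    simpa using fun e he => hw e (p.edges_subset_edgeSet he)

lemma walkWeight_bypass_le [DecidableEq V] (hw : ∀ e ∈ G.edgeSet, 0 ≤ w e) {u v : V}
    (p : G.Walk u v) : walkWeight w p.bypass ≤ walkWeight w p :=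
  (p.edges_bypass_sublist_edges.map w).sum_le_sum <| by
    simpa using fun e he => hw e (p.edges_subset_edgeSet he)

end WalkWeight

section Distance

variable {w : Sym2 V → ℝ}

lemma wdist_le_walkWeight {u v : V} (p : G.Walk u v) :
    wdist G w u v ≤ ENNReal.ofReal (walkWeight w p) :=
  iInf_le _ p

lemma wdist_ne_top {u v : V} (h : G.Reachable u v) : wdist G w u v ≠ ⊤ :=
  let ⟨p⟩ := h
  ne_top_of_le_ne_top ENNReal.ofReal_ne_top (wdist_le_walkWeight p)

lemma wdist_comm (u v : V) : wdist G w u v = wdist G w v u :=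
  have key (x y : V) : wdist G w x y ≤ wdist G w y x :=
    le_iInf fun p => by simpa using wdist_le_walkWeight (w := w) p.reverse
  (key u v).antisymm (key v u)

lemma wdist_triangle (x y z : V) : wdist G w x z ≤ wdist G w x y + wdist G w y z := by
  simp only [wdist, ENNReal.iInf_add, ENNReal.add_iInf]
  refine le_iInf₂ fun q p => (wdist_le_walkWeight (p.append q)).trans ?_
  rw [walkWeight_append]
  exact ENNReal.ofReal_add_le

lemma wdist_le_walkWeight_of_forall_adj {G' : SimpleGraph V} {w' : Sym2 V → ℝ}
    (hw' : ∀ e ∈ G'.edgeSet, 0 ≤ w' e)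
    (hdom : ∀ a b, G'.Adj a b → wdist G w a b ≤ ENNReal.ofReal (w' s(a, b)))
    {x y : V} (q : G'.Walk x y) : wdist G w x y ≤ ENNReal.ofReal (walkWeight w' q) := by
  induction q with
  | nil => simpa using wdist_le_walkWeight (w := w) (nil : G.Walk _ _)
  | @cons x x' y h q ih =>
    calc wdist G w x y ≤ wdist G w x x' + wdist G w x' y := wdist_triangle x x' y
      _ ≤ ENNReal.ofReal (w' s(x, x')) + ENNReal.ofReal (walkWeight w' q) :=
        add_le_add (hdom _ _ h) ih
      _ = ENNReal.ofReal (walkWeight w' (cons h q)) := by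
        rw [walkWeight_cons, ENNReal.ofReal_add (hw' _ h) (walkWeight_nonneg hw' q)]

end Distance

section FewerHops

variable (w : Sym2 V → ℝ)

def StrictlyLighterThanFewerHops {u v : V} (p : G.Walk u v) : Prop :=
  ∀ q : G.Walk u v, q.length < p.length → walkWeight w p < walkWeight w q

variable {w}

lemma StrictlyLighterThanFewerHops.of_isSubwalk {u v x y : V} {p : G.Walk u v}
    {s : G.Walk x y} (hp : StrictlyLighterThanFewerHops w p) (hs : s.IsSubwalk p) :
    StrictlyLighterThanFewerHops w s := by
  obtain ⟨r₁, r₂, rfl⟩ := hs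
  intro t ht
  have := hp ((r₁.append t).append r₂) (by simp only [length_append]; omega)
  simp only [walkWeight_append] at this
  linarith

lemma strictlyLighterThanFewerHops_of_fewest_edges {u v : V} (hw : ∀ e ∈ G.edgeSet, 0 ≤ w e)
    {p : G.Walk u v} (hshort : ENNReal.ofReal (walkWeight w p) = wdist G w u v)
    (hmin : ∀ q : G.Walk u v, q.IsPath →
      ENNReal.ofReal (walkWeight w q) = wdist G w u v → p.length ≤ q.length) :
    StrictlyLighterThanFewerHops w p := by
  classical
  intro q hq
  by_contra! hle
  have hbypass : ENNReal.ofReal (walkWeight w q.bypass) = wdist G w u v :=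
    le_antisymm (hshort ▸ ENNReal.ofReal_le_ofReal ((walkWeight_bypass_le hw q).trans hle))
      (wdist_le_walkWeight _)
  have := hmin q.bypass q.bypass_isPath hbypass
  have := q.length_bypass_le_length
  omega

end FewerHops

structure IsShortcutGraph (G : SimpleGraph V) (w : Sym2 V → ℝ) (S : V → Finset V)
    (G' : SimpleGraph V) (w' : Sym2 V → ℝ) : Prop where
  adj_iff : ∀ a b, G'.Adj a b ↔ G.Adj a b ∨ b ∈ S a ∨ a ∈ S b
  weight_shortcut :
    ∀ a b, G'.Adj a b → (b ∈ S a ∨ a ∈ S b) → w' s(a, b) = (wdist G w a b).toReal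
  weight_edge : ∀ a b, G'.Adj a b → ¬(b ∈ S a ∨ a ∈ S b) → w' s(a, b) = w s(a, b)

namespace IsShortcutGraph

variable {w : Sym2 V → ℝ} {S : V → Finset V} {G' : SimpleGraph V} {w' : Sym2 V → ℝ}
  (hG : IsShortcutGraph G w S G' w') (hw : ∀ e ∈ G.edgeSet, 0 ≤ w e) (hconn : G.Connected)

include hG in
lemma adj_of_mem {a b : V} (h : b ∈ S a ∨ a ∈ S b) : G'.Adj a b :=
  (hG.adj_iff a b).2 (Or.inr h)

include hG hw in
lemma weight_nonneg : ∀ e ∈ G'.edgeSet, 0 ≤ w' e := by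
  intro e he
  induction e using Sym2.ind with
  | _ a b =>
    by_cases h : b ∈ S a ∨ a ∈ S b
    · exact (hG.weight_shortcut a b he h).symm ▸ ENNReal.toReal_nonneg
    · exact (hG.weight_edge a b he h).symm ▸ hw _ (((hG.adj_iff a b).1 he).resolve_right h)

include hG hconn in
lemma wdist_le_weight {a b : V} (hab : G'.Adj a b) :
    wdist G w a b ≤ ENNReal.ofReal (w' s(a, b)) := by
  by_cases h : b ∈ S a ∨ a ∈ S b
  · rw [hG.weight_shortcut a b hab h,
      ENNReal.ofReal_toReal (wdist_ne_top (hconn.preconnected a b))]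
  · have hadj : G.Adj a b := ((hG.adj_iff a b).1 hab).resolve_right h
    simpa [hG.weight_edge a b hab h] using wdist_le_walkWeight (w := w) hadj.toWalk

include hG hw hconn in
lemma toReal_wdist_le_walkWeight {a b : V} (q : G'.Walk a b) :
    (wdist G w a b).toReal ≤ walkWeight w' q :=
  ENNReal.toReal_le_of_le_ofReal (walkWeight_nonneg (hG.weight_nonneg hw) q) <|
    wdist_le_walkWeight_of_forall_adj (hG.weight_nonneg hw) (fun _ _ => hG.wdist_le_weight hconn) q

include hG hw hconn in
lemma notMem_of_two_le_length {a b : V} {s : G'.Walk a b}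
    (hs : StrictlyLighterThanFewerHops w' s) (hlen : 2 ≤ s.length) : ¬(b ∈ S a ∨ a ∈ S b) := by
  intro h
  have hadj := hG.adj_of_mem h
  have hlt := hs hadj.toWalk (by simp; omega)
  have hle := hG.toReal_wdist_le_walkWeight hw hconn s
  simp only [Adj.toWalk, walkWeight_cons, walkWeight_nil, add_zero,
    hG.weight_shortcut a b hadj h] at hlt
  linarith

include hG hw hconn in
lemma disjoint_of_length_eq_four
    (hnear : ∀ u, ∀ y ∈ S u, ∀ y', y' ∉ S u → y' ≠ u → wdist G w u y ≤ wdist G w u y')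
    {a b : V} {s : G'.Walk a b} (hpath : s.IsPath) (hs : StrictlyLighterThanFewerHops w' s)
    (hlen : s.length = 4) : Disjoint (S a) (S b) := by
  rw [Finset.disjoint_left]
  intro z hza hzb
  set c := s.getVert 2
  have hca : c ∉ S a := fun h => hG.notMem_of_two_le_length hw hconn
    (hs.of_isSubwalk (s.isSubwalk_take 2)) (by simp [hlen]) (Or.inl h)
  have hcb : c ∉ S b := fun h => hG.notMem_of_two_le_length hw hconn
    (hs.of_isSubwalk (s.isSubwalk_drop 2)) (by simp [hlen]) (Or.inr h)
  have hac : c ≠ a := fun h => by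
    have := hpath.getVert_injOn (by simp [hlen]) (by simp) (h.trans s.getVert_zero.symm)
    omega
  have hbc : c ≠ b := fun h => by
    have := hpath.getVert_injOn (by simp [hlen]) (by simp [hlen])
      (h.trans (s.getVert_length).symm)
    omega
  have hfin {x y : V} : wdist G w x y ≠ ⊤ := wdist_ne_top (hconn.preconnected x y)
  have hadj₁ := hG.adj_of_mem (Or.inl hza)
  have hadj₂ := hG.adj_of_mem (Or.inr hzb)
  have hlt := hs (cons hadj₁ hadj₂.toWalk) (by simp [hlen])
  have hle : walkWeight w' (cons hadj₁ hadj₂.toWalk) ≤ walkWeight w' s := calc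
    _ = (wdist G w a z).toReal + (wdist G w b z).toReal := by
      simp [Adj.toWalk, hG.weight_shortcut a z hadj₁ (Or.inl hza),
        hG.weight_shortcut z b hadj₂ (Or.inr hzb), wdist_comm z b]
    _ ≤ (wdist G w a c).toReal + (wdist G w c b).toReal := by
      rw [wdist_comm c b]
      gcongr
      exacts [hfin, hnear a z hza c hca hac, hfin, hnear b z hzb c hcb hbc]
    _ ≤ walkWeight w' (s.take 2) + walkWeight w' (s.drop 2) :=
      add_le_add (hG.toReal_wdist_le_walkWeight hw hconn _)
        (hG.toReal_wdist_le_walkWeight hw hconn _)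
    _ = walkWeight w' s := by rw [← walkWeight_append, append_take_drop_eq]
  linarith

end IsShortcutGraph

end

theorem stmt_7_general {V : Type*} (G : SimpleGraph V) (w : Sym2 V → ℝ)
    (hw : ∀ e ∈ G.edgeSet, 0 < w e) (hconn : G.Connected)
    -- `S u` is a set of `k` nearest vertices to `u`
    (S : V → Finset V)
    (hSnear : ∀ u, ∀ y ∈ S u, ∀ y', y' ∉ S u → y' ≠ u →
      wdist G w u y ≤ wdist G w u y')
    -- `(G', w')` is the `k`-shortcut graph of `(G, w)`
    (G' : SimpleGraph V)
    (hG' : ∀ a b : V, G'.Adj a b ↔ (G.Adj a b ∨ b ∈ S a ∨ a ∈ S b))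
    (w' : Sym2 V → ℝ)
    (hw'short : ∀ a b : V, G'.Adj a b → (b ∈ S a ∨ a ∈ S b) →
      w' s(a, b) = (wdist G w a b).toReal)
    (hw'old : ∀ a b : V, G'.Adj a b → ¬(b ∈ S a ∨ a ∈ S b) →
      w' s(a, b) = w s(a, b))
    -- `p` is a shortest `u`–`v` path in `(G', w')` with the minimum number of edges
    -- among all shortest `u`–`v` paths
    (u v : V) (p : G'.Walk u v) (hpath : p.IsPath)
    (hshort : ENNReal.ofReal (walkWeight w' p) = wdist G' w' u v)
    (hmin : ∀ q : G'.Walk u v, q.IsPath →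
      ENNReal.ofReal (walkWeight w' q) = wdist G' w' u v → p.length ≤ q.length)
    (i : ℕ) (hi : 4 * (i + 1) ≤ p.length) :
    Disjoint (S (p.getVert (4 * i))) (S (p.getVert (4 * (i + 1)))) := by
  have hG : IsShortcutGraph G w S G' w' := ⟨hG', hw'short, hw'old⟩
  have hw₀ : ∀ e ∈ G.edgeSet, 0 ≤ w e := fun e he => (hw e he).le
  have hp : StrictlyLighterThanFewerHops w' p :=
    strictlyLighterThanFewerHops_of_fewest_edges (hG.weight_nonneg hw₀) hshort hmin
  have hsub : ((p.drop (4 * i)).take 4).IsSubwalk p :=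
    ((p.drop (4 * i)).isSubwalk_take 4).trans (p.isSubwalk_drop (4 * i))
  simpa [mul_add] using hG.disjoint_of_length_eq_four hw₀ hconn hSnear
    ((hpath.drop _).take 4) (hp.of_isSubwalk hsub) (by simp; omega)

theorem stmt_7 {V : Type*} [Fintype V] (G : SimpleGraph V) (w : Sym2 V → ℝ)
    (hw : ∀ e ∈ G.edgeSet, 0 < w e) (hconn : G.Connected)
    (k : ℕ) (hk1 : 1 ≤ k) (hkn : k ≤ Fintype.card V - 1)
    -- `S u` is a set of `k` nearest vertices to `u`
    (S : V → Finset V)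
    (hSnot : ∀ u, u ∉ S u) (hScard : ∀ u, (S u).card = k)
    (hSnear : ∀ u, ∀ y ∈ S u, ∀ y', y' ∉ S u → y' ≠ u →
      wdist G w u y ≤ wdist G w u y')
    -- `(G', w')` is the `k`-shortcut graph of `(G, w)`
    (G' : SimpleGraph V)
    (hG' : ∀ a b : V, G'.Adj a b ↔ (G.Adj a b ∨ b ∈ S a ∨ a ∈ S b))
    (w' : Sym2 V → ℝ)
    (hw'short : ∀ a b : V, G'.Adj a b → (b ∈ S a ∨ a ∈ S b) →
      w' s(a, b) = (wdist G w a b).toReal)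
    (hw'old : ∀ a b : V, G'.Adj a b → ¬(b ∈ S a ∨ a ∈ S b) →
      w' s(a, b) = w s(a, b))
    -- `p` is a shortest `u`–`v` path in `(G', w')` with the minimum number of edges
    -- among all shortest `u`–`v` paths
    (u v : V) (p : G'.Walk u v) (hpath : p.IsPath)
    (hshort : ENNReal.ofReal (walkWeight w' p) = wdist G' w' u v)
    (hmin : ∀ q : G'.Walk u v, q.IsPath →
      ENNReal.ofReal (walkWeight w' q) = wdist G' w' u v → p.length ≤ q.length)
    (i : ℕ) (hi : 4 * (i + 1) ≤ p.length) :
    Disjoint (S (p.getVert (4 * i))) (S (p.getVert (4 * (i + 1)))) :=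
  stmt_7_general G w hw hconn S hSnear G' hG' w' hw'short hw'old u v p hpath hshort hmin i hi
end
end
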